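/- Let C ⊂ [0,1] be the standard middle-thirds Cantor set, obtained by removing at the n-th step 2^{n−1} open intervals I_n^k of length 3^{−n}, and let E := ⋃_{j≥1} ⋃_{k=1}^{2^{2j−1}} I_{2j}^k be the union of the open intervals removed at the even steps. Then for every x ∈ C, 1/54 ≤ liminf_{r→0⁺} |B_r(x) ∩ E|/(2r) ≤ limsup_{r→0⁺} |B_r(x) ∩ E|/(2r) ≤ 53/54, where |·| denotes the one-dimensional Lebesgue measure. Consequently, the approximate discontinuity set of the characteristic function χ_E coincides with C. -/

import Mathlib

open MeasureTheory Topology Filter Metric Set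

noncomputable section

namespace GGCantor

/-- The pre-Cantor sets: `preCantor n` is what remains of `[0,1]` after `n` steps
of the middle-thirds removal; `preCantor (n-1) \ preCantor n` is the union of the
`2^{n-1}` open intervals `I_n^k` of length `3^{-n}` removed at step `n`. -/
def preCantor : ℕ → Set ℝ
  | 0 => Icc 0 1
  | n + 1 => (fun x : ℝ => x / 3) '' preCantor n ∪ (fun x : ℝ => (x + 2) / 3) '' preCantor n

/-- The middle-thirds Cantor set. -/
def cantorSet : Set ℝ := ⋂ n, preCantor n

/-- `E`: the union of the open intervals removed at the even steps `n = 2j`, `j ≥ 1`. -/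
def evenRemoved : Set ℝ :=
  ⋃ j : ℕ, (preCantor (2 * j + 1) \ preCantor (2 * j + 2))

/-- Approximate limit `z` of `u` at `x` (one-dimensional). -/
def ApproxLimAtR (u : ℝ → ℝ) (x z : ℝ) : Prop :=
  Tendsto (fun r : ℝ => ⨍ y in ball x r, |u y - z| ∂volume) (𝓝[>] 0) (𝓝 0)

/-- The approximate discontinuity set of `u`. -/
def SSetR (u : ℝ → ℝ) : Set ℝ := {x | ¬ ∃ z, ApproxLimAtR u x z}

/-!
Every `x ∈ C` lies in an interval `J` of the `m`-th step, of length `3⁻ᵐ`; choosing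
`3⁻ᵐ < r ≤ 3¹⁻ᵐ` puts `J` inside `B_r(x)`. The middle third of `J` is removed at step `m + 1`
and the middle third of its left third at step `m + 2`; both have length `≥ r / 27`, and since
consecutive steps have opposite parity one lies in `E` and the other outside it. So `E` and its
complement each fill at least `1/27` of `B_r(x)`, which gives the density bounds and forbids an
approximate limit of `χ_E` at `x`. Off `C`, `χ_E` is locally constant: the complement of `C` is
`ℝ \ [0, 1]` together with the open removed intervals.
-/

theorem le_liminf_le_limsup_le_of_eventually_mem_Icc {α : Type*} {f : Filter α} [f.NeBot]
    {u : α → ℝ} {a b : ℝ} (h : ∀ᶠ t in f, u t ∈ Icc a b) :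
    a ≤ liminf u f ∧ liminf u f ≤ limsup u f ∧ limsup u f ≤ b := by
  have hbdd_above : IsBoundedUnder (· ≤ ·) f u := ⟨b, h.mono fun _ ht => ht.2⟩
  have hbdd_below : IsBoundedUnder (· ≥ ·) f u := ⟨a, h.mono fun _ ht => ht.1⟩
  exact ⟨le_liminf_of_le hbdd_above.isCoboundedUnder_ge (h.mono fun _ ht => ht.1),
    liminf_le_limsup hbdd_above hbdd_below,
    limsup_le_of_le hbdd_below.isCoboundedUnder_le (h.mono fun _ ht => ht.2)⟩

theorem le_setAverage_of_le_on_subset {α : Type*} [MeasurableSpace α] {μ : Measure α}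
    {f : α → ℝ} {s t : Set α} {c : ℝ} (hst : s ⊆ t) (hs : MeasurableSet s) (ht : μ t ≠ ⊤)
    (hf : IntegrableOn f t μ) (hf0 : 0 ≤ f) (hc : ∀ y ∈ s, c ≤ f y) :
    (μ.real t)⁻¹ * (c * μ.real s) ≤ ⨍ y in t, f y ∂μ := by
  have hs_le : c * μ.real s ≤ ∫ y in s, f y ∂μ := by
    simpa [smul_eq_mul, mul_comm] using
      setIntegral_ge_of_const_le hs (measure_ne_top_of_subset hst ht) hc (hf.mono_set hst)
  have hst_le : ∫ y in s, f y ∂μ ≤ ∫ y in t, f y ∂μ :=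
    setIntegral_mono_set hf (Eventually.of_forall hf0) (Eventually.of_forall hst)
  rw [setAverage_eq, smul_eq_mul]
  exact mul_le_mul_of_nonneg_left (hs_le.trans hst_le) (by positivity)

theorem approxLimAtR_of_eventuallyEq_const {u : ℝ → ℝ} {x c : ℝ}
    (h : u =ᶠ[𝓝 x] fun _ => c) : ApproxLimAtR u x c := by
  obtain ⟨ε, hε, hball⟩ := Metric.mem_nhds_iff.1 h
  refine tendsto_const_nhds.congr' ?_
  filter_upwards [Ioo_mem_nhdsGT hε] with r hr
  rw [setAverage_congr_fun measurableSet_ball (g := fun _ => (0 : ℝ))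
    (Eventually.of_forall fun y hy => by
      simpa [sub_eq_zero] using hball (ball_subset_ball hr.2.le hy))]
  simp

/-- A candidate limit `z` is at distance `≥ 1/2` from one of the two values of `χ_E`, and each
value is taken on a proportion `≥ δ` of the ball. -/
theorem not_exists_approxLimAtR_indicator {E : Set ℝ} (hE : MeasurableSet E) {x δ : ℝ}
    (hδ : 0 < δ) (h : ∀ᶠ r in 𝓝[>] 0,
      δ * r ≤ volume.real (ball x r ∩ E) ∧ δ * r ≤ volume.real (ball x r \ E)) :
    ¬ ∃ z, ApproxLimAtR (E.indicator fun _ => (1 : ℝ)) x z := by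
  rintro ⟨z, hz⟩
  set u := E.indicator fun _ => (1 : ℝ) with hu
  have hint : ∀ r, IntegrableOn (fun y => |u y - z|) (ball x r) := fun r =>
    (((integrableOn_const (C := (1 : ℝ))).indicator hE).sub integrableOn_const).abs
  have hlow : ∀ᶠ r in 𝓝[>] 0, δ / 4 ≤ ⨍ y in ball x r, |u y - z| := by
    filter_upwards [h, self_mem_nhdsWithin] with r ⟨hin, hout⟩ (hr : 0 < r)
    obtain ⟨S, hSsub, hSm, hSvol, hS⟩ : ∃ S ⊆ ball x r, MeasurableSet S ∧
        δ * r ≤ volume.real S ∧ ∀ y ∈ S, 1 / 2 ≤ |u y - z| := by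
      rcases le_or_gt z (1 / 2) with hz | hz
      · refine ⟨ball x r ∩ E, inter_subset_left, measurableSet_ball.inter hE, hin, ?_⟩
        rintro y ⟨-, hy⟩
        rw [hu, indicator_of_mem hy, abs_of_nonneg (by linarith)]
        linarith
      · refine ⟨ball x r \ E, sdiff_subset, measurableSet_ball.diff hE, hout, ?_⟩
        rintro y ⟨-, hy⟩
        rw [hu, indicator_of_notMem hy, zero_sub, abs_neg, abs_of_pos (by linarith)]
        linarith
    calc δ / 4 = (2 * r)⁻¹ * (1 / 2 * (δ * r)) := by field_simp; ring
      _ ≤ (volume.real (ball x r))⁻¹ * (1 / 2 * volume.real S) := by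
        rw [Real.volume_real_ball hr.le]; gcongr
      _ ≤ ⨍ y in ball x r, |u y - z| :=
        le_setAverage_of_le_on_subset hSsub hSm measure_ball_lt_top.ne (hint r)
          (fun _ => abs_nonneg _) hS
  linarith [ge_of_tendsto hz hlow]

theorem density_mem_Icc_of_le {E : Set ℝ} (hE : MeasurableSet E) {x r δ : ℝ} (hr : 0 < r)
    (hin : δ * r ≤ volume.real (ball x r ∩ E)) (hout : δ * r ≤ volume.real (ball x r \ E)) :
    volume.real (ball x r ∩ E) / (2 * r) ∈ Icc (δ / 2) (1 - δ / 2) := by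
  have hsum : volume.real (ball x r ∩ E) + volume.real (ball x r \ E) = 2 * r := by
    rw [measureReal_inter_add_sdiff hE, Real.volume_real_ball hr.le]
  constructor
  · rw [le_div_iff₀ (by positivity)]; linarith
  · rw [div_le_iff₀ (by positivity)]; linarith

/-- `removed k = ⋃ᵢ I_{k+1}^i`, the open intervals removed at step `k + 1`. -/
def removed (k : ℕ) : Set ℝ := preCantor k \ preCantor (k + 1)

theorem mem_preCantor_succ {n : ℕ} {x : ℝ} :
    x ∈ preCantor (n + 1) ↔ ∃ c ∈ ({0, 2} : Set ℝ), 3 * x - c ∈ preCantor n := by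
  constructor
  · rintro (⟨y, hy, rfl⟩ | ⟨y, hy, rfl⟩)
    · exact ⟨0, by simp, by convert hy using 1; ring⟩
    · exact ⟨2, by simp, by convert hy using 1; ring⟩
  · rintro ⟨c, rfl | rfl, h⟩
    · exact Or.inl ⟨_, h, by ring⟩
    · exact Or.inr ⟨_, h, by ring⟩

theorem preCantor_subset_Icc (n : ℕ) : preCantor n ⊆ Icc 0 1 := by
  induction n with
  | zero => exact subset_rfl
  | succ n ih =>
    intro x hx
    obtain ⟨c, hc, h⟩ := mem_preCantor_succ.1 hx
    obtain ⟨h0, h1⟩ := ih h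
    rcases hc with rfl | rfl <;> constructor <;> linarith

theorem preCantor_antitone : Antitone preCantor := by
  refine antitone_nat_of_succ_le fun n => ?_
  induction n with
  | zero => exact preCantor_subset_Icc 1
  | succ n ih =>
    intro x hx
    obtain ⟨c, hc, h⟩ := mem_preCantor_succ.1 hx
    exact mem_preCantor_succ.2 ⟨c, hc, ih h⟩

/-- The two affine pieces of `preCantor (n + 1)` lie in `[0, 1/3]` and `[2/3, 1]`, so at most one
of the shifts `c ∈ {0, 2}` can bring `3 * x` back into `[0, 1]`. -/
theorem mem_removed_succ {n : ℕ} {x : ℝ} :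
    x ∈ removed (n + 1) ↔ ∃ c ∈ ({0, 2} : Set ℝ), 3 * x - c ∈ removed n := by
  constructor
  · rintro ⟨hx, hx'⟩
    obtain ⟨c, hc, h⟩ := mem_preCantor_succ.1 hx
    exact ⟨c, hc, h, fun h' => hx' (mem_preCantor_succ.2 ⟨c, hc, h'⟩)⟩
  · rintro ⟨c, hc, h, h'⟩
    refine ⟨mem_preCantor_succ.2 ⟨c, hc, h⟩, fun hx => ?_⟩
    obtain ⟨c', hc', h''⟩ := mem_preCantor_succ.1 hx
    obtain ⟨h0, h1⟩ := preCantor_subset_Icc n h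
    obtain ⟨h0', h1'⟩ := preCantor_subset_Icc (n + 1) h''
    rcases hc with rfl | rfl <;> rcases hc' with rfl | rfl
    · exact h' h''
    · linarith
    · linarith
    · exact h' h''

theorem removed_zero : removed 0 = Ioo (1 / 3) (2 / 3) := by
  ext x
  constructor
  · rintro ⟨⟨h0, h1⟩, h⟩
    by_contra hx
    rcases le_or_gt x (1 / 3) with hx1 | hx1
    · exact h (mem_preCantor_succ.2 ⟨0, by simp, by constructor <;> linarith⟩)
    · have hx2 : 2 / 3 ≤ x := not_lt.1 fun hx2 => hx ⟨hx1, hx2⟩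
      exact h (mem_preCantor_succ.2 ⟨2, by simp, by constructor <;> linarith⟩)
  · rintro ⟨h1, h2⟩
    refine ⟨⟨by linarith, by linarith⟩, fun hx => ?_⟩
    obtain ⟨c, rfl | rfl, h0, h1⟩ := mem_preCantor_succ.1 hx <;> linarith

theorem isOpen_removed (k : ℕ) : IsOpen (removed k) := by
  induction k with
  | zero => exact removed_zero ▸ isOpen_Ioo
  | succ k ih =>
    have : removed (k + 1) = ⋃ c ∈ ({0, 2} : Set ℝ), (fun x => 3 * x - c) ⁻¹' removed k := by
      ext x
      simp only [mem_iUnion, mem_preimage, exists_prop]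
      exact mem_removed_succ
    rw [this]
    exact isOpen_biUnion fun c _ => ih.preimage (by fun_prop)

theorem disjoint_removed {i j : ℕ} (h : i ≠ j) : Disjoint (removed i) (removed j) := by
  wlog hij : i < j generalizing i j
  · exact (this h.symm (lt_of_le_of_ne (not_lt.1 hij) h.symm)).symm
  exact disjoint_sdiff_left.mono_right fun x hx => preCantor_antitone hij hx.1

theorem removed_subset_evenRemoved {k : ℕ} (hk : Odd k) : removed k ⊆ evenRemoved := by
  obtain ⟨j, rfl⟩ := hk
  exact subset_iUnion (fun j => removed (2 * j + 1)) j

theorem disjoint_removed_evenRemoved {k : ℕ} (hk : Even k) : Disjoint (removed k) evenRemoved :=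
  disjoint_iUnion_right.2 fun j => disjoint_removed (j := 2 * j + 1) (by rintro rfl; simp at hk)

theorem isOpen_evenRemoved : IsOpen evenRemoved :=
  isOpen_iUnion fun j => isOpen_removed (2 * j + 1)

theorem exists_interval_of_mem_preCantor {m : ℕ} {x : ℝ} (hx : x ∈ preCantor m) :
    ∃ a, x ∈ Icc a (a + (3 ^ m)⁻¹) ∧
      Ioo (a + (3 ^ m)⁻¹ / 3) (a + 2 * (3 ^ m)⁻¹ / 3) ⊆ removed m ∧
      Ioo (a + (3 ^ m)⁻¹ / 9) (a + 2 * (3 ^ m)⁻¹ / 9) ⊆ removed (m + 1) := by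
  induction m generalizing x with
  | zero =>
    refine ⟨0, by simpa only [pow_zero, inv_one, zero_add, preCantor] using hx,
      fun y hy => ?_, fun y hy => ?_⟩ <;>
      simp only [pow_zero, inv_one, zero_add, mem_Ioo] at hy
    · rw [removed_zero]; constructor <;> linarith
    · refine mem_removed_succ.2 ⟨0, by simp, ?_⟩
      rw [removed_zero]; constructor <;> linarith
  | succ m ih =>
    obtain ⟨c, hc, hxc⟩ := mem_preCantor_succ.1 hx
    obtain ⟨a, ⟨ha, ha'⟩, hmid, hninth⟩ := ih hxc
    have hl : ((3 : ℝ) ^ (m + 1))⁻¹ = (3 ^ m)⁻¹ / 3 := by rw [pow_succ]; ring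
    rw [hl]
    refine ⟨(a + c) / 3, ⟨by linarith, by linarith⟩, fun y hy => ?_, fun y hy => ?_⟩ <;>
      obtain ⟨hy, hy'⟩ := hy
    · exact mem_removed_succ.2 ⟨c, hc, hmid ⟨by linarith, by linarith⟩⟩
    · exact mem_removed_succ.2 ⟨c, hc, hninth ⟨by linarith, by linarith⟩⟩

theorem exists_volume_ball_inter_removed_ge {x r : ℝ} (hx : x ∈ cantorSet) (hr : 0 < r)
    (hr1 : r ≤ 1) : ∃ m, 27⁻¹ * r ≤ volume.real (ball x r ∩ removed m) ∧
      27⁻¹ * r ≤ volume.real (ball x r ∩ removed (m + 1)) := by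
  obtain ⟨n, hn, hn'⟩ := exists_nat_pow_near ((one_le_inv₀ hr).2 hr1) (by norm_num : (1 : ℝ) < 3)
  obtain ⟨a, ⟨ha, ha'⟩, hmid, hninth⟩ :=
    exists_interval_of_mem_preCantor (mem_iInter.1 hx (n + 1))
  set l := ((3 : ℝ) ^ (n + 1))⁻¹
  have hlr : l < r := (inv_lt_comm₀ hr (by positivity)).1 hn'
  have hrl : r ≤ 3 * l := by
    have : r ≤ (3 ^ n)⁻¹ := (le_inv_comm₀ (by positivity) hr).1 hn
    simpa [l, pow_succ, mul_inv, ← mul_assoc] using this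
  have hIoo : ∀ {p q : ℝ} {k : ℕ}, a ≤ p → p ≤ q → q ≤ a + l → Ioo p q ⊆ removed k →
      q - p ≤ volume.real (ball x r ∩ removed k) := by
    intro p q k hp hpq hq hsub
    rw [← Real.volume_real_Ioo_of_le hpq]
    refine measureReal_mono (fun y hy => ⟨?_, hsub hy⟩)
      (measure_ne_top_of_subset inter_subset_left measure_ball_lt_top.ne)
    rw [mem_ball, Real.dist_eq, abs_lt]
    constructor <;> linarith [hy.1, hy.2]
  exact ⟨n + 1, (hIoo (by linarith) (by linarith) (by linarith) hmid).trans' (by linarith),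
    (hIoo (by linarith) (by linarith) (by linarith) hninth).trans' (by linarith)⟩

theorem eventually_volume_ball_evenRemoved_ge {x : ℝ} (hx : x ∈ cantorSet) :
    ∀ᶠ r in 𝓝[>] 0, 27⁻¹ * r ≤ volume.real (ball x r ∩ evenRemoved) ∧
      27⁻¹ * r ≤ volume.real (ball x r \ evenRemoved) := by
  filter_upwards [Ioc_mem_nhdsGT zero_lt_one] with r ⟨hr, hr1⟩
  obtain ⟨m, hm, hm'⟩ := exists_volume_ball_inter_removed_ge hx hr hr1
  have mono : ∀ {S T : Set ℝ}, S ⊆ T → volume.real (ball x r ∩ S) ≤ volume.real (ball x r ∩ T) :=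
    fun hST => measureReal_mono (inter_subset_inter_right _ hST)
      (measure_ne_top_of_subset inter_subset_left measure_ball_lt_top.ne)
  rw [sdiff_eq]
  rcases Nat.even_or_odd m with he | ho
  · exact ⟨hm'.trans (mono (removed_subset_evenRemoved he.add_one)),
      hm.trans (mono (disjoint_removed_evenRemoved he).subset_compl_right)⟩
  · exact ⟨hm.trans (mono (removed_subset_evenRemoved ho)),
      hm'.trans (mono (disjoint_removed_evenRemoved ho.add_one).subset_compl_right)⟩

theorem eventually_density_evenRemoved_mem_Icc {x : ℝ} (hx : x ∈ cantorSet) :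
    ∀ᶠ r in 𝓝[>] 0, volume.real (ball x r ∩ evenRemoved) / (2 * r) ∈ Icc (1 / 54) (53 / 54) := by
  filter_upwards [eventually_volume_ball_evenRemoved_ge hx, self_mem_nhdsWithin]
    with r ⟨hin, hout⟩ hr
  convert density_mem_Icc_of_le isOpen_evenRemoved.measurableSet hr hin hout using 2 <;> norm_num

theorem exists_eventuallyEq_indicator_evenRemoved {x : ℝ} (hx : x ∉ cantorSet) :
    ∃ c, (evenRemoved.indicator fun _ => (1 : ℝ)) =ᶠ[𝓝 x] fun _ => c := by
  by_cases h0 : x ∈ preCantor 0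
  · obtain ⟨k, hk, hk'⟩ := Nat.exists_not_and_succ_of_not_zero_of_exists
      (p := fun n => x ∉ preCantor n) (not_not.2 h0) (by simpa [cantorSet] using hx)
    have hnhds := (isOpen_removed k).mem_nhds ⟨not_not.1 hk, hk'⟩
    rcases Nat.even_or_odd k with he | ho
    · exact ⟨0, eventuallyEq_of_mem hnhds fun y hy =>
        indicator_of_notMem ((disjoint_removed_evenRemoved he).notMem_of_mem_left hy) _⟩
    · exact ⟨1, eventuallyEq_of_mem hnhds fun y hy =>
        indicator_of_mem (removed_subset_evenRemoved ho hy) _⟩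
  · refine ⟨0, eventuallyEq_of_mem (isClosed_Icc.isOpen_compl.mem_nhds h0) fun y hy =>
      indicator_of_notMem (fun hyE => hy ?_) _⟩
    obtain ⟨j, hj⟩ := mem_iUnion.1 hyE
    exact preCantor_subset_Icc _ hj.1

/-- Example 3.5 of the paper.
For the set `E` of intervals removed from `[0,1]` at the even steps of the
Cantor middle-thirds construction, every point `x` of the Cantor set satisfies
`1/54 ≤ liminf_{r→0⁺} |B_r(x) ∩ E|/(2r) ≤ limsup_{r→0⁺} |B_r(x) ∩ E|/(2r) ≤ 53/54`,
and consequently the approximate discontinuity set of `χ_E` is exactly the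
Cantor set. -/
theorem cantor_density_example :
    (∀ x ∈ cantorSet,
      (1 / 54 : ℝ) ≤
          liminf (fun r : ℝ => (volume (ball x r ∩ evenRemoved)).toReal / (2 * r))
            (𝓝[>] 0) ∧
      liminf (fun r : ℝ => (volume (ball x r ∩ evenRemoved)).toReal / (2 * r))
            (𝓝[>] 0) ≤
        limsup (fun r : ℝ => (volume (ball x r ∩ evenRemoved)).toReal / (2 * r))
            (𝓝[>] 0) ∧
      limsup (fun r : ℝ => (volume (ball x r ∩ evenRemoved)).toReal / (2 * r))
            (𝓝[>] 0) ≤ (53 / 54 : ℝ)) ∧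
    SSetR (Set.indicator evenRemoved fun _ => (1 : ℝ)) = cantorSet := by
  refine ⟨fun x hx =>
    le_liminf_le_limsup_le_of_eventually_mem_Icc (eventually_density_evenRemoved_mem_Icc hx), ?_⟩
  ext x
  refine ⟨fun hx => ?_, fun hx => not_exists_approxLimAtR_indicator
    isOpen_evenRemoved.measurableSet (by norm_num) (eventually_volume_ball_evenRemoved_ge hx)⟩
  by_contra hxC
  obtain ⟨c, hc⟩ := exists_eventuallyEq_indicator_evenRemoved hxC
  exact hx ⟨c, approxLimAtR_of_eventuallyEq_const hc⟩

end GGCantor
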